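/- arXiv:1912.03947 — 4 statements merged into one kernel-verified Lean document; each statement's English description precedes it below -/
import Mathlib

section
/- Let d ≥ 2 and let h : ℝ^d → ℝ be continuous. If h(v) + h(v_*) = h(v') + h(v'_*) for all v, v_* ∈ ℝ^d and all ω ∈ S^{d-1}, then h is a linear combination of the collision invariants 1, v, |v|²: there exist ρ, θ ∈ ℝ and u ∈ ℝ^d such that h(v) = ρ + u·v + θ|v|² for every v ∈ ℝ^d. -/
open scoped InnerProductSpace


lemma quadFE (f : ℝ → ℝ) (hf : Continuous f)
    (hq : ∀ a b : ℝ, f (a + b) + f (a - b) = 2 * f a + 2 * f b) :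
    ∀ t : ℝ, f t = f 1 * t ^ 2 := by
  have h0 : f 0 = 0 := by have := hq 0 0; norm_num at this; linarith
  have heven : ∀ t, f (-t) = f t := by
    intro t
    have := hq 0 t
    simp only [zero_add, zero_sub, h0] at this
    linarith
  have hnat : ∀ (n : ℕ) (a : ℝ), f (n * a) = n ^ 2 * f a := by
    intro n
    induction n using Nat.twoStepInduction with
    | zero => intro a; simp [h0]
    | one => intro a; simp
    | more n ih1 ih2 =>
      intro a
      have key := hq ((n + 1 : ℝ) * a) a
      have e1 : (n + 1 : ℝ) * a + a = ((n + 2 : ℕ) : ℝ) * a := by push_cast; ring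
      have e2 : (n + 1 : ℝ) * a - a = (n : ℝ) * a := by ring
      have e3 : ((n + 1 : ℝ)) * a = ((n + 1 : ℕ) : ℝ) * a := by push_cast; ring
      rw [e1, e2, e3, ih1 a, ih2 a] at key
      have : f (((n + 2 : ℕ) : ℝ) * a) = 2 * (((n+1:ℕ):ℝ)^2 * f a) + 2 * f a - (n:ℝ)^2 * f a := by
        linarith
      rw [this]
      push_cast
      ring
  have hrat : ∀ q : ℚ, f q = f 1 * (q : ℝ) ^ 2 := by
    intro q
    have hden : (0 : ℝ) < (q.den : ℝ) := by exact_mod_cast q.pos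
    have h1 : f ((q.den : ℝ) * (q : ℝ)) = (q.den : ℝ) ^ 2 * f q := by
      exact_mod_cast hnat q.den (q : ℝ)
    have hnum : (q.den : ℝ) * (q : ℝ) = (q.num : ℝ) := by
      rw [mul_comm]
      exact_mod_cast Rat.mul_den_eq_num q
    have h2 : f ((q.num : ℝ)) = (q.num : ℝ) ^ 2 * f 1 := by
      rcases le_or_gt 0 q.num with hn | hn
      · have e : ((q.num.toNat : ℕ) : ℝ) = (q.num : ℝ) := by
          exact_mod_cast Int.toNat_of_nonneg hn
        have : ((q.num : ℝ)) = ((q.num.toNat : ℕ) : ℝ) * 1 := by rw [e]; ring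
        rw [this, hnat q.num.toNat 1, e]; ring
      · have : ((q.num : ℝ)) = -(((-q.num).toNat : ℕ) : ℝ) * 1 := by
          have : (((-q.num).toNat : ℕ) : ℝ) = -(q.num : ℝ) := by
            exact_mod_cast Int.toNat_of_nonneg (by omega : 0 ≤ -q.num)
          rw [this]; ring
        rw [this, neg_mul, heven, hnat]
        have e : (((-q.num).toNat : ℕ) : ℝ) = -(q.num : ℝ) := by
          exact_mod_cast Int.toNat_of_nonneg (by omega : 0 ≤ -q.num)
        rw [e]; ring
    rw [hnum, h2] at h1
    have hq2 : (q : ℝ) = (q.num : ℝ) / (q.den : ℝ) := by exact_mod_cast (Rat.num_div_den q).symm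
    have : f q = (q.num : ℝ) ^ 2 * f 1 / (q.den : ℝ) ^ 2 := by
      field_simp at h1 ⊢; linarith
    rw [this, hq2]; ring
  intro t
  have hclosed : IsClosed {t : ℝ | f t = f 1 * t ^ 2} :=
    isClosed_eq hf (by continuity)
  have hdense : Dense (Set.range (Rat.cast : ℚ → ℝ)) := Rat.isDenseEmbedding_coe_real.dense
  have hsub : Set.range (Rat.cast : ℚ → ℝ) ⊆ {t : ℝ | f t = f 1 * t ^ 2} := by
    rintro _ ⟨q, rfl⟩; exact hrat q
  have : ∀ x : ℝ, x ∈ {t : ℝ | f t = f 1 * t ^ 2} := by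
    intro x
    have := hclosed.closure_subset_iff.mpr hsub
    exact this (hdense x)
  exact this t


lemma exists_ortho_partner (d : ℕ) (hd : 2 ≤ d) (x : EuclideanSpace ℝ (Fin d)) :
    ∃ y : EuclideanSpace ℝ (Fin d), ⟪x, y⟫_ℝ = 0 ∧ ‖y‖ = ‖x‖ := by
  rcases eq_or_ne x 0 with rfl | hx
  · exact ⟨0, by simp, by simp⟩
  set K : Submodule ℝ (EuclideanSpace ℝ (Fin d)) := ℝ ∙ x with hK
  have hfin : Module.finrank ℝ (EuclideanSpace ℝ (Fin d)) = d := finrank_euclideanSpace_fin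
  have hKle : Module.finrank ℝ K = 1 := finrank_span_singleton hx
  have hbot : Kᗮ ≠ ⊥ := by
    intro hb
    have := Submodule.finrank_add_finrank_orthogonal (𝕜 := ℝ) K
    rw [hb] at this
    simp [hKle, hfin] at this
    omega
  obtain ⟨z, hz, hzne⟩ := Submodule.exists_mem_ne_zero_of_ne_bot hbot
  have hxz : ⟪x, z⟫_ℝ = 0 := by
    have := (Submodule.mem_orthogonal K z).mp hz x (Submodule.mem_span_singleton_self x)
    exact this
  refine ⟨(‖x‖ / ‖z‖) • z, ?_, ?_⟩
  · rw [real_inner_smul_right, hxz]; ring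
  · rw [norm_smul]
    have hzn : ‖z‖ ≠ 0 := norm_ne_zero_iff.mpr hzne
    rw [Real.norm_eq_abs, abs_of_nonneg (div_nonneg (norm_nonneg x) (norm_nonneg z))]
    field_simp

lemma even_part (d : ℕ) (hd : 2 ≤ d) (E : EuclideanSpace ℝ (Fin d) → ℝ)
    (hcont : Continuous E) (heven : ∀ v, E (-v) = E v)
    (hadd : ∀ x y, ⟪x, y⟫_ℝ = 0 → E (x + y) = E x + E y) :
    ∃ c : ℝ, ∀ v, E v = c * ‖v‖ ^ 2 := by
  have E0 : E 0 = 0 := by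
    have := hadd 0 0 (by simp)
    simp at this
    linarith
  -- key: for orthogonal equal-norm x y, E (2x) = 2 E x + 2 E y
  have Ekey : ∀ x y : EuclideanSpace ℝ (Fin d), ⟪x, y⟫_ℝ = 0 → ‖x‖ = ‖y‖ →
      E ((2:ℝ) • x) = 2 * E x + 2 * E y := by
    intro x y hxy hnorm
    have horth : ⟪x + y, x - y⟫_ℝ = 0 := by
      rw [inner_sub_right, inner_add_left, inner_add_left,
        real_inner_self_eq_norm_sq, real_inner_self_eq_norm_sq, hnorm, real_inner_comm y x]
      ring
    have hsum : (x + y) + (x - y) = (2:ℝ) • x := by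
      rw [two_smul]; abel
    have h1 : E ((2:ℝ) • x) = E (x + y) + E (x - y) := by rw [← hsum]; exact hadd _ _ horth
    have h2 : E (x + y) = E x + E y := hadd x y hxy
    have h3 : E (x - y) = E x + E y := by
      have : ⟪x, -y⟫_ℝ = 0 := by rw [inner_neg_right, hxy, neg_zero]
      have := hadd x (-y) this
      rw [← sub_eq_add_neg] at this
      rw [this, heven]
    linarith
  -- the frame
  set u : EuclideanSpace ℝ (Fin d) := EuclideanSpace.single ⟨0, by omega⟩ (1:ℝ) with hu_def
  set w : EuclideanSpace ℝ (Fin d) := EuclideanSpace.single ⟨1, by omega⟩ (1:ℝ) with hw_def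
  have hu : ‖u‖ = 1 := by simp [hu_def, EuclideanSpace.norm_single]
  have hw : ‖w‖ = 1 := by simp [hw_def, EuclideanSpace.norm_single]
  have huw : ⟪u, w⟫_ℝ = 0 := by
    rw [hu_def, hw_def, EuclideanSpace.inner_single_left]
    simp [EuclideanSpace.single_apply]
  set f : ℝ → ℝ := fun s => E (s • u) with hf_def
  -- E along any unit direction orthogonal to u equals f
  have fw : ∀ w' : EuclideanSpace ℝ (Fin d), ⟪u, w'⟫_ℝ = 0 → ‖w'‖ = 1 →
      ∀ t : ℝ, E (t • w') = f t := by
    intro w' ho hn t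
    have step : ∀ s : ℝ, E ((2:ℝ) • (s • u)) = 2 * E (s • u) + 2 * E (s • w') ∧
        E ((2:ℝ) • (s • w')) = 2 * E (s • w') + 2 * E (s • u) := by
      intro s
      have o1 : ⟪s • u, s • w'⟫_ℝ = 0 := by
        rw [real_inner_smul_left, real_inner_smul_right, ho]; ring
      have o2 : ⟪s • w', s • u⟫_ℝ = 0 := by rw [real_inner_comm]; exact o1
      have n1 : ‖s • u‖ = ‖s • w'‖ := by rw [norm_smul, norm_smul, hu, hn]
      exact ⟨Ekey _ _ o1 n1, Ekey _ _ o2 n1.symm⟩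
    have key : ∀ s : ℝ, E ((2 * s) • u) = E ((2 * s) • w') := by
      intro s
      have h1 := (step s).1
      have h2 := (step s).2
      have e1 : (2:ℝ) • (s • u) = (2 * s) • u := by rw [smul_smul]
      have e2 : (2:ℝ) • (s • w') = (2 * s) • w' := by rw [smul_smul]
      rw [e1] at h1; rw [e2] at h2
      linarith
    have := key (t / 2)
    rw [show 2 * (t / 2) = t by ring] at this
    rw [← this]
  have feven : ∀ s : ℝ, f (-s) = f s := by
    intro s
    show E ((-s) • u) = E (s • u)
    rw [neg_smul, heven]
  -- quadratic functional equation for f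
  have fquad : ∀ a b : ℝ, f (a + b) + f (a - b) = 2 * f a + 2 * f b := by
    intro a b
    have o0 : ⟪(a + b) • u, (a - b) • w⟫_ℝ = 0 := by
      rw [real_inner_smul_left, real_inner_smul_right, huw]; ring
    have lhs : E ((a + b) • u + (a - b) • w) = f (a + b) + f (a - b) := by
      rw [hadd _ _ o0, fw w huw hw]
    have split : (a + b) • u + (a - b) • w = (a • u + a • w) + (b • u + (-b) • w) := by
      rw [add_smul, sub_smul, neg_smul]; abel
    have o1 : ⟪a • u + a • w, b • u + (-b) • w⟫_ℝ = 0 := by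
      simp only [inner_add_left, inner_add_right, real_inner_smul_left, real_inner_smul_right,
        real_inner_self_eq_norm_sq, real_inner_comm w u, huw, hu, hw]
      ring
    have o2 : ⟪a • u, a • w⟫_ℝ = 0 := by
      rw [real_inner_smul_left, real_inner_smul_right, huw]; ring
    have o3 : ⟪b • u, (-b) • w⟫_ℝ = 0 := by
      rw [real_inner_smul_left, real_inner_smul_right, huw]; ring
    have rhs1 : E (a • u + a • w) = f a + f a := by rw [hadd _ _ o2, fw w huw hw]
    have rhs2 : E (b • u + (-b) • w) = f b + f b := by
      rw [hadd _ _ o3, fw w huw hw, feven]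
    calc f (a + b) + f (a - b) = E ((a + b) • u + (a - b) • w) := lhs.symm
      _ = E (a • u + a • w) + E (b • u + (-b) • w) := by rw [split]; exact hadd _ _ o1
      _ = 2 * f a + 2 * f b := by rw [rhs1, rhs2]; ring
  have fcont : Continuous f := hcont.comp (continuous_id.smul continuous_const)
  have fc := quadFE f fcont fquad
  refine ⟨f 1, fun v => ?_⟩
  set s : ℝ := ⟪u, v⟫_ℝ with hs_def
  set z : EuclideanSpace ℝ (Fin d) := v - s • u with hz_def
  have huz : ⟪u, z⟫_ℝ = 0 := by
    rw [hz_def, inner_sub_right, real_inner_smul_right, real_inner_self_eq_norm_sq, hu]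
    simp [hs_def]
  have hoz : ⟪s • u, z⟫_ℝ = 0 := by rw [real_inner_smul_left, huz]; ring
  have hv : v = s • u + z := by rw [hz_def]; abel
  have hEz : E z = f 1 * ‖z‖ ^ 2 := by
    rcases eq_or_ne z 0 with hz0 | hz0
    · rw [hz0]; simp [E0]
    · have hzn : ‖z‖ ≠ 0 := norm_ne_zero_iff.mpr hz0
      set w' : EuclideanSpace ℝ (Fin d) := ‖z‖⁻¹ • z with hw'_def
      have hw'n : ‖w'‖ = 1 := norm_smul_inv_norm hz0
      have hw'o : ⟪u, w'⟫_ℝ = 0 := by rw [hw'_def, real_inner_smul_right, huz]; ring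
      have : z = ‖z‖ • w' := by
        rw [hw'_def, smul_smul, mul_inv_cancel₀ hzn, one_smul]
      rw [this, fw w' hw'o hw'n, fc]
      rw [norm_smul, hw'n]
      simp [abs_of_nonneg (norm_nonneg z)]
  have hnorm : ‖v‖ ^ 2 = s ^ 2 + ‖z‖ ^ 2 := by
    rw [hv, norm_add_sq_real, hoz, norm_smul, hu]
    simp [Real.norm_eq_abs, sq_abs]
  rw [hv, hadd _ _ hoz, ← hv, hnorm]
  have : E (s • u) = f 1 * s ^ 2 := fc s
  rw [this, hEz]
  ring

lemma odd_part (d : ℕ) (hd : 2 ≤ d) (O : EuclideanSpace ℝ (Fin d) → ℝ)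
    (hcont : Continuous O) (hodd : ∀ v, O (-v) = -O v)
    (hadd : ∀ x y, ⟪x, y⟫_ℝ = 0 → O (x + y) = O x + O y) :
    ∃ u : EuclideanSpace ℝ (Fin d), ∀ v, O v = ⟪u, v⟫_ℝ := by
  have O0 : O 0 = 0 := by
    have := hadd 0 0 (by simp); simp at this; linarith
  -- additivity along a line, for factors of the same sign
  have lineadd0 : ∀ (e : EuclideanSpace ℝ (Fin d)), ‖e‖ = 1 → ∀ a b : ℝ, 0 ≤ a * b →
      O ((a + b) • e) = O (a • e) + O (b • e) := by
    intro e he a b hab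
    obtain ⟨z, hez, hzn⟩ := exists_ortho_partner d hd e
    rw [he] at hzn
    set c := Real.sqrt (a * b) with hc_def
    have hc2 : c * c = a * b := Real.mul_self_sqrt hab
    have hze : ⟪z, e⟫_ℝ = 0 := by rw [real_inner_comm]; exact hez
    have opq : ⟪a • e + c • z, b • e + (-c) • z⟫_ℝ = 0 := by
      simp only [inner_add_left, inner_add_right, real_inner_smul_left, real_inner_smul_right,
        real_inner_self_eq_norm_sq, hez, hze, he, hzn]
      nlinarith [hc2]
    have hsum : (a • e + c • z) + (b • e + (-c) • z) = (a + b) • e := by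
      rw [add_smul, neg_smul]; abel
    have oez : ∀ t s : ℝ, ⟪t • e, s • z⟫_ℝ = 0 := by
      intro t s
      rw [real_inner_smul_left, real_inner_smul_right, hez]; ring
    have h1 : O (a • e + c • z) = O (a • e) + O (c • z) := hadd _ _ (oez a c)
    have h2 : O (b • e + (-c) • z) = O (b • e) - O (c • z) := by
      rw [hadd _ _ (oez b (-c)), neg_smul, hodd]; ring
    have h3 := hadd _ _ opq
    rw [hsum, h1, h2] at h3
    rw [h3]; ring
  -- additivity along a line, general
  have lineadd : ∀ (e : EuclideanSpace ℝ (Fin d)), ‖e‖ = 1 → ∀ a b : ℝ,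
      O ((a + b) • e) = O (a • e) + O (b • e) := by
    intro e he a b
    rcases le_or_gt 0 (a * b) with hab | hab
    · exact lineadd0 e he a b hab
    · -- a and b have opposite signs
      have key : ∀ a b : ℝ, 0 ≤ a → b ≤ 0 → O ((a + b) • e) = O (a • e) + O (b • e) := by
        intro a b ha hb
        rcases le_or_gt 0 (a + b) with hs | hs
        · -- a = (a+b) + (-b), with (a+b)(-b) ≥ 0
          have h := lineadd0 e he (a + b) (-b) (mul_nonneg hs (by linarith))
          rw [show a + b + -b = a by ring] at h
          have hb' : O ((-b) • e) = -O (b • e) := by rw [neg_smul, hodd]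
          rw [hb'] at h
          linarith
        · -- b = (a+b) + (-a), with (a+b)(-a) ≥ 0
          have h := lineadd0 e he (a + b) (-a) (by nlinarith)
          rw [show a + b + -a = b by ring] at h
          have ha' : O ((-a) • e) = -O (a • e) := by rw [neg_smul, hodd]
          rw [ha'] at h
          linarith
      rcases le_or_gt 0 a with ha | ha
      · exact key a b ha (by nlinarith)
      · have := key b a (by nlinarith) (le_of_lt ha)
        rw [show b + a = a + b by ring] at this
        rw [this]; ring
  -- full additivity
  have Oadd : ∀ v w : EuclideanSpace ℝ (Fin d), O (v + w) = O v + O w := by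
    intro v w
    rcases eq_or_ne v 0 with rfl | hv
    · simp [O0]
    set e : EuclideanSpace ℝ (Fin d) := ‖v‖⁻¹ • v with he_def
    have he : ‖e‖ = 1 := norm_smul_inv_norm hv
    have hvn : ‖v‖ ≠ 0 := norm_ne_zero_iff.mpr hv
    have hve : v = ‖v‖ • e := by
      rw [he_def, smul_smul, mul_inv_cancel₀ hvn, one_smul]
    set s : ℝ := ⟪e, w⟫_ℝ with hs_def
    set z : EuclideanSpace ℝ (Fin d) := w - s • e with hz_def
    have hez : ⟪e, z⟫_ℝ = 0 := by
      rw [hz_def, inner_sub_right, real_inner_smul_right, real_inner_self_eq_norm_sq, he]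
      simp [hs_def]
    have oez : ∀ t : ℝ, ⟪t • e, z⟫_ℝ = 0 := by
      intro t; rw [real_inner_smul_left, hez]; ring
    have hw : w = s • e + z := by rw [hz_def]; abel
    have hvw : v + w = (‖v‖ + s) • e + z := by
      conv_lhs => rw [hve, hw]
      rw [add_smul]; abel
    rw [hvw, hadd _ _ (oez (‖v‖ + s)), lineadd e he]
    conv_rhs => rw [hve, hw]
    rw [hadd _ _ (oez s)]
    ring
  -- O is a continuous additive map, hence linear; apply Riesz
  have Osmul : ∀ (r : ℝ) (v : EuclideanSpace ℝ (Fin d)), O (r • v) = r * O v := by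
    intro r v
    set L : EuclideanSpace ℝ (Fin d) →L[ℝ] ℝ :=
      AddMonoidHom.toRealLinearMap (AddMonoidHom.mk' O Oadd) hcont with hL
    have : O (r • v) = L (r • v) := rfl
    rw [this, L.map_smul]
    rfl
  set L : EuclideanSpace ℝ (Fin d) →L[ℝ] ℝ :=
    AddMonoidHom.toRealLinearMap (AddMonoidHom.mk' O Oadd) hcont with hL
  obtain ⟨u, hu⟩ := (InnerProductSpace.toDual ℝ (EuclideanSpace ℝ (Fin d))).surjective L
  refine ⟨u, fun v => ?_⟩
  have : L v = ⟪u, v⟫_ℝ := by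
    rw [← hu]; rfl
  exact this

/-- For `d ≥ 2`, a continuous function `h : ℝ^d → ℝ` satisfying
`h(v) + h(v_*) = h(v') + h(v'_*)` for all `v, v_*` and all unit vectors `ω` (where
`v', v'_*` is the collision transform) is a linear combination of the collision
invariants `1, v, |v|²`. -/
theorem collision_invariant_characterization
    (d : ℕ) (hd : 2 ≤ d)
    (h : EuclideanSpace ℝ (Fin d) → ℝ) (hcont : Continuous h)
    (hinv : ∀ (v vstar ω : EuclideanSpace ℝ (Fin d)), ‖ω‖ = 1 →
      h v + h vstar =
        h (v - ⟪v - vstar, ω⟫_ℝ • ω) + h (vstar + ⟪v - vstar, ω⟫_ℝ • ω)) :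
    ∃ (ρ θ : ℝ) (u : EuclideanSpace ℝ (Fin d)),
      ∀ v : EuclideanSpace ℝ (Fin d), h v = ρ + ⟪u, v⟫_ℝ + θ * ‖v‖ ^ 2 := by
  -- the function g(v) = h(v) - h(0) is orthogonally additive
  set g : EuclideanSpace ℝ (Fin d) → ℝ := fun v => h v - h 0 with hg
  have gcont : Continuous g := hcont.sub continuous_const
  have gadd : ∀ x y : EuclideanSpace ℝ (Fin d), ⟪x, y⟫_ℝ = 0 →
      g (x + y) = g x + g y := by
    intro x y hxy
    rcases eq_or_ne x 0 with rfl | hx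
    · simp [hg]
    have hxn : ‖x‖ ≠ 0 := norm_ne_zero_iff.mpr hx
    have hω : ‖(‖x‖⁻¹ • x : EuclideanSpace ℝ (Fin d))‖ = 1 := norm_smul_inv_norm hx
    have key := hinv (x + y) 0 (‖x‖⁻¹ • x) hω
    have hyx : ⟪y, x⟫_ℝ = 0 := by rw [real_inner_comm]; exact hxy
    have h1 : ⟪x + y - 0, ‖x‖⁻¹ • x⟫_ℝ = ‖x‖ := by
      rw [sub_zero, real_inner_smul_right, inner_add_left, real_inner_self_eq_norm_sq, hyx]
      field_simp
      ring
    rw [h1] at key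
    have h2 : ‖x‖ • (‖x‖⁻¹ • x) = x := by
      rw [smul_smul, mul_inv_cancel₀ hxn, one_smul]
    rw [h2] at key
    rw [show x + y - x = y by abel, zero_add] at key
    simp only [hg]
    linarith
  -- split into even and odd parts
  have negadd : ∀ x y : EuclideanSpace ℝ (Fin d), ⟪x, y⟫_ℝ = 0 →
      g (-(x + y)) = g (-x) + g (-y) := by
    intro x y hxy
    rw [neg_add]
    exact gadd (-x) (-y) (by rw [inner_neg_neg]; exact hxy)
  obtain ⟨c, hc⟩ := even_part d hd (fun v => g v + g (-v))
    (gcont.add (gcont.comp continuous_neg))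
    (fun v => by simp only [neg_neg]; ring)
    (fun x y hxy => by
      rw [gadd x y hxy, negadd x y hxy]
      ring)
  obtain ⟨u0, hu0⟩ := odd_part d hd (fun v => g v - g (-v))
    (gcont.sub (gcont.comp continuous_neg))
    (fun v => by simp only [neg_neg]; ring)
    (fun x y hxy => by
      rw [gadd x y hxy, negadd x y hxy]
      ring)
  refine ⟨h 0, c / 2, (2:ℝ)⁻¹ • u0, fun v => ?_⟩
  have hEv := hc v
  have hOd := hu0 v
  rw [real_inner_smul_left]
  have hgv : h v = h 0 + g v := by simp [hg]
  rw [hgv]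
  have : g v = ((g v + g (-v)) + (g v - g (-v))) / 2 := by ring
  rw [this, hEv, hOd]
  ring
end

section
/- Let d ≥ 1, ρ > 0, T > 0 and u ∈ ℝ^d, and let M_{ρ,u,T}(v) = ρ (2πT)^{-d/2} exp(−|v − u|²/(2T)) be the corresponding Maxwellian. Then M_{ρ,u,T} is a thermodynamic equilibrium of the collision process: Q(M_{ρ,u,T}, M_{ρ,u,T})(v) = 0 for every v ∈ ℝ^d. -/
/-! A Maxwellian is `c * exp φ` with `φ w = -‖w - u‖² / (2T)`, and `φ` is a collision invariant
by conservation of energy. Hence `M(v') M(v'_*) = M(v) M(v_*)` for every collision: gain and loss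
cancel pointwise and the integrand of `Q(M, M)` vanishes identically. -/

open MeasureTheory Real
open scoped InnerProductSpace

noncomputable section

/-- Post-collisional velocity `v' = v - ((v - v_*)·ω) ω`. -/
def vOut {d : ℕ} (v vs ω : EuclideanSpace ℝ (Fin d)) : EuclideanSpace ℝ (Fin d) :=
  v - ⟪v - vs, ω⟫_ℝ • ω

/-- Post-collisional velocity `v'_* = v_* + ((v - v_*)·ω) ω`. -/
def vsOut {d : ℕ} (v vs ω : EuclideanSpace ℝ (Fin d)) : EuclideanSpace ℝ (Fin d) :=
  vs + ⟪v - vs, ω⟫_ℝ • ω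

/-- Hard-sphere collision cross-section `b(v - v_*, ω) = ((v - v_*)·ω)_+`. -/
def bHS {d : ℕ} (v vs ω : EuclideanSpace ℝ (Fin d)) : ℝ := max ⟪v - vs, ω⟫_ℝ 0

/-- The surface measure `dω` on the unit sphere `S^{d-1} ⊆ ℝ^d`. -/
def sphereMeasure (d : ℕ) : Measure (Metric.sphere (0 : EuclideanSpace ℝ (Fin d)) 1) :=
  (volume : Measure (EuclideanSpace ℝ (Fin d))).toSphere

/-- The hard-sphere Boltzmann collision operator
`Q(f,f)(v) = ∫∫ (f(v') f(v'_*) - f(v) f(v_*)) b(v - v_*, ω) dv_* dω`. -/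
def Qcoll {d : ℕ} (f : EuclideanSpace ℝ (Fin d) → ℝ) (v : EuclideanSpace ℝ (Fin d)) : ℝ :=
  ∫ vs : EuclideanSpace ℝ (Fin d),
    ∫ ω : Metric.sphere (0 : EuclideanSpace ℝ (Fin d)) 1,
      (f (vOut v vs ↑ω) * f (vsOut v vs ↑ω) - f v * f vs) * bHS v vs ↑ω ∂(sphereMeasure d)


def IsCollisionInvariant {d : ℕ} (φ : EuclideanSpace ℝ (Fin d) → ℝ) : Prop :=
  ∀ v vs ω : EuclideanSpace ℝ (Fin d), ‖ω‖ = 1 →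
    φ (vOut v vs ω) + φ (vsOut v vs ω) = φ v + φ vs

namespace IsCollisionInvariant

variable {d : ℕ} {φ : EuclideanSpace ℝ (Fin d) → ℝ}

lemma neg (hφ : IsCollisionInvariant φ) : IsCollisionInvariant fun w => -φ w := by
  intro v vs ω hω
  linear_combination -hφ v vs ω hω

lemma div_const (hφ : IsCollisionInvariant φ) (c : ℝ) :
    IsCollisionInvariant fun w => φ w / c := by
  intro v vs ω hω
  simp only [← add_div, hφ v vs ω hω]

end IsCollisionInvariant

lemma isCollisionInvariant_norm_sub_sq {d : ℕ} (u : EuclideanSpace ℝ (Fin d)) :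
    IsCollisionInvariant fun w => ‖w - u‖ ^ 2 := by
  intro v vs ω hω
  set c : ℝ := ⟪v - vs, ω⟫_ℝ with hc
  have hv : vOut v vs ω - u = (v - u) - c • ω := by
    simp only [vOut]; abel
  have hvs : vsOut v vs ω - u = (vs - u) + c • ω := by
    simp only [vsOut]; abel
  have hcω : ‖c • ω‖ ^ 2 = c ^ 2 := by
    rw [norm_smul, mul_pow, hω, Real.norm_eq_abs, sq_abs, one_pow, mul_one]
  have hc' : ⟪v - u, ω⟫_ℝ - ⟪vs - u, ω⟫_ℝ = c := by
    rw [hc, ← inner_sub_left, sub_sub_sub_cancel_right]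
  beta_reduce
  rw [hv, hvs, norm_sub_sq_real, norm_add_sq_real, hcω, real_inner_smul_right,
    real_inner_smul_right]
  linear_combination (-2 * c) * hc'

lemma Qcoll_eq_zero_of_mul_eq_mul {d : ℕ} {f : EuclideanSpace ℝ (Fin d) → ℝ}
    (hf : ∀ v vs ω : EuclideanSpace ℝ (Fin d), ‖ω‖ = 1 →
      f (vOut v vs ω) * f (vsOut v vs ω) = f v * f vs)
    (v : EuclideanSpace ℝ (Fin d)) : Qcoll f v = 0 := by
  simp only [Qcoll, hf v _ _ (norm_eq_of_mem_sphere _), sub_self, zero_mul, integral_zero]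

lemma Qcoll_const_mul_exp_eq_zero {d : ℕ} {φ : EuclideanSpace ℝ (Fin d) → ℝ}
    (hφ : IsCollisionInvariant φ) (c : ℝ) (v : EuclideanSpace ℝ (Fin d)) :
    Qcoll (fun w => c * Real.exp (φ w)) v = 0 := by
  refine Qcoll_eq_zero_of_mul_eq_mul (fun v vs ω hω => ?_) v
  have hexp : Real.exp (φ (vOut v vs ω)) * Real.exp (φ (vsOut v vs ω)) =
      Real.exp (φ v) * Real.exp (φ vs) := by
    rw [← Real.exp_add, ← Real.exp_add, hφ v vs ω hω]
  linear_combination c ^ 2 * hexp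

theorem maxwellian_is_equilibrium_general
    (d : ℕ)
    (ρ T : ℝ) (u : EuclideanSpace ℝ (Fin d)) :
    ∀ v : EuclideanSpace ℝ (Fin d),
      Qcoll (fun w => ρ * (2 * π * T) ^ (-(d : ℝ) / 2) *
        Real.exp (-‖w - u‖ ^ 2 / (2 * T))) v = 0 :=
  Qcoll_const_mul_exp_eq_zero ((isCollisionInvariant_norm_sub_sq u).neg.div_const (2 * T)) _

/-- Every Maxwellian `M_{ρ,u,T}(v) = ρ (2πT)^{-d/2} exp(-|v-u|²/(2T))`
is a thermodynamic equilibrium of the collision process: `Q(M,M) = 0`. -/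
theorem maxwellian_is_equilibrium
    (d : ℕ) (hd : 1 ≤ d)
    (ρ T : ℝ) (hρ : 0 < ρ) (hT : 0 < T) (u : EuclideanSpace ℝ (Fin d)) :
    ∀ v : EuclideanSpace ℝ (Fin d),
      Qcoll (fun w => ρ * (2 * π * T) ^ (-(d : ℝ) / 2) *
        Real.exp (-‖w - u‖ ^ 2 / (2 * T))) v = 0 :=
  maxwellian_is_equilibrium_general d ρ T u
end
end

section
/- Let 𝕋² = (ℝ/ℤ)² be the flat two-dimensional torus, equipped with the quotient distance and its Haar probability measure. Let N ≥ 1 be an integer and 0 < ε < 1/2 with N π ε² ≤ 1/2. Then the measure of the hard-sphere configuration set { (x₁, …, x_N) ∈ (𝕋²)^N : |x_i − x_j| > ε for all i ≠ j } is at least (1 − N π ε²)^N; in particular, in the Boltzmann–Grad scaling N ε = 1/α this partition function is bounded below by exp(−2π/α²). -/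
open MeasureTheory Real

noncomputable section

/-- The flat two-dimensional torus `𝕋² = (ℝ/ℤ)²`. -/
abbrev Torus2 : Type := AddCircle (1 : ℝ) × AddCircle (1 : ℝ)

/-- The (Euclidean) quotient distance on `𝕋²`, built from the quotient distances of the two
circle factors. -/
def torusDist (a b : Torus2) : ℝ :=
  Real.sqrt (dist a.1 b.1 ^ 2 + dist a.2 b.2 ^ 2)

/-!
Place the points one at a time. Given `n` admissible points, the next one only has to avoid the
`n` closed `ε`-discs around them; lifted to the fundamental square `(-1/2, 1/2]²` each such disc
lies inside a Euclidean disc of area `π ε²`, so the admissible positions have measure at least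
`1 - n π ε²`. Fubini then gives `Z_N ≥ ∏_{k<N} (1 - k π ε²) ≥ (1 - N π ε²)^N`, and the
Boltzmann–Grad bound follows from `1 - b ≥ exp (-2 b)` for `0 ≤ b ≤ 1/2`.
-/

open Set

instance : IsProbabilityMeasure (volume : Measure UnitAddCircle) :=
  ⟨UnitAddCircle.measure_univ⟩

instance : IsProbabilityMeasure (volume : Measure Torus2) := by
  rw [Measure.volume_eq_prod]; infer_instance

instance : (volume : Measure Torus2).IsAddRightInvariant := by
  rw [Measure.volume_eq_prod]; infer_instance

theorem torusDist_comm (a b : Torus2) : torusDist a b = torusDist b a := by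
  simp only [torusDist, dist_comm a.1, dist_comm a.2]

theorem torusDist_eq_torusDist_sub_zero (a b : Torus2) : torusDist a b = torusDist (a - b) 0 := by
  simp [torusDist, dist_eq_norm]

theorem Continuous.torusDist {X : Type*} [TopologicalSpace X] {f g : X → Torus2}
    (hf : Continuous f) (hg : Continuous g) : Continuous fun x => torusDist (f x) (g x) := by
  unfold _root_.torusDist; fun_prop

theorem torusDist_coe_zero {s t : ℝ} (hs : |s| ≤ 1 / 2) (ht : |t| ≤ 1 / 2) :
    torusDist ((s : UnitAddCircle), (t : UnitAddCircle)) 0 = √(s ^ 2 + t ^ 2) := by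
  have norm_coe {x : ℝ} (hx : |x| ≤ 1 / 2) : ‖(x : UnitAddCircle)‖ = |x| :=
    (AddCircle.norm_coe_eq_abs_iff (p := 1) one_ne_zero).2 (by simpa using hx)
  simp [torusDist, norm_coe hs, norm_coe ht]

theorem measurableSet_setOf_torusDist_le (y : Torus2) (ε : ℝ) :
    MeasurableSet {x : Torus2 | torusDist x y ≤ ε} :=
  (isClosed_le (continuous_id.torusDist continuous_const) continuous_const).measurableSet

theorem measurePreserving_coe_prod_coe :
    MeasurePreserving (Prod.map ((↑) : ℝ → UnitAddCircle) ((↑) : ℝ → UnitAddCircle))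
      (volume.restrict (Ioc (-(1 / 2) : ℝ) (1 / 2) ×ˢ Ioc (-(1 / 2)) (1 / 2))) volume := by
  have h := UnitAddCircle.measurePreserving_mk (-(1 / 2))
  rw [show (-(1 / 2) : ℝ) + 1 = 1 / 2 by norm_num] at h
  rw [Measure.volume_eq_prod, ← Measure.prod_restrict, Measure.volume_eq_prod]
  exact h.prod h

theorem volume_setOf_torusDist_le (y : Torus2) (ε : ℝ) :
    volume {x : Torus2 | torusDist x y ≤ ε} ≤ ENNReal.ofReal (π * ε ^ 2) := by
  set B := {z : Torus2 | torusDist z 0 ≤ ε}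
  have hB : MeasurableSet B := measurableSet_setOf_torusDist_le 0 ε
  have h_translate : {x | torusDist x y ≤ ε} = (· + -y) ⁻¹' B := by
    ext x; simp [B, torusDist_eq_torusDist_sub_zero x y, sub_eq_add_neg]
  rw [h_translate, measure_preimage_add_right,
    ← measurePreserving_coe_prod_coe.measure_preimage hB.nullMeasurableSet,
    Measure.restrict_apply (hB.preimage (by fun_prop))]
  calc _ ≤ volume (Complex.measurableEquivRealProd.symm ⁻¹' Metric.closedBall 0 ε) := by
        refine measure_mono ?_
        rintro ⟨s, t⟩ ⟨hst, ⟨hs₁, hs₂⟩, ht₁, ht₂⟩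
        have hs : |s| ≤ 1 / 2 := abs_le.2 ⟨by linarith, hs₂⟩
        have ht : |t| ≤ 1 / 2 := abs_le.2 ⟨by linarith, ht₂⟩
        simpa [B, torusDist_coe_zero hs ht, Complex.norm_eq_sqrt_sq_add_sq] using hst
    _ = NNReal.pi * ENNReal.ofReal ε ^ 2 := by
        rw [Complex.volume_preserving_equiv_real_prod.symm.measure_preimage
          measurableSet_closedBall.nullMeasurableSet, Complex.volume_closedBall, mul_comm]
    _ ≤ ENNReal.ofReal (π * ε ^ 2) := by
        rcases le_or_gt 0 ε with hε | hε
        · rw [ENNReal.ofReal_mul pi_nonneg, ENNReal.ofReal_pow hε, ← NNReal.coe_real_pi,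
            ENNReal.ofReal_coe_nnreal]
        · simp [ENNReal.ofReal_of_nonpos hε.le]

theorem ofReal_one_sub_le_volume_setOf_forall_lt_torusDist {n : ℕ} (Y : Fin n → Torus2)
    (ε : ℝ) :
    ENNReal.ofReal (1 - n * π * ε ^ 2) ≤ volume {x : Torus2 | ∀ i, ε < torusDist x (Y i)} := by
  have h_compl :
      {x : Torus2 | ∀ i, ε < torusDist x (Y i)} = (⋃ i, {x | torusDist x (Y i) ≤ ε})ᶜ := by
    ext x; simp
  rw [h_compl, prob_compl_eq_one_sub (.iUnion fun i => measurableSet_setOf_torusDist_le (Y i) ε),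
    mul_assoc, ENNReal.ofReal_sub _ (by positivity), ENNReal.ofReal_one,
    ENNReal.ofReal_mul (Nat.cast_nonneg n), ENNReal.ofReal_natCast]
  gcongr
  calc _ ≤ ∑ i, volume {x : Torus2 | torusDist x (Y i) ≤ ε} := measure_iUnion_fintype_le _ _
    _ ≤ ∑ _i : Fin n, ENNReal.ofReal (π * ε ^ 2) :=
        Finset.sum_le_sum fun i _ => volume_setOf_torusDist_le (Y i) ε
    _ = n * ENNReal.ofReal (π * ε ^ 2) := by simp

def hardSphereConfigs (n : ℕ) (ε : ℝ) : Set (Fin n → Torus2) :=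
  {X | ∀ i j, i ≠ j → ε < torusDist (X i) (X j)}

theorem measurableSet_hardSphereConfigs (n : ℕ) (ε : ℝ) :
    MeasurableSet (hardSphereConfigs n ε) := by
  simp only [hardSphereConfigs, ofPred_forall]
  exact .iInter fun i => .iInter fun j => .iInter fun _ =>
    measurableSet_lt measurable_const
      ((continuous_apply i).torusDist (continuous_apply j)).measurable

theorem hardSphereConfigs_zero (ε : ℝ) : hardSphereConfigs 0 ε = univ :=
  eq_univ_of_forall fun _ i => i.elim0

theorem cons_mem_hardSphereConfigs {n : ℕ} {ε : ℝ} {x : Torus2} {Y : Fin n → Torus2}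
    (hY : Y ∈ hardSphereConfigs n ε) (hx : ∀ i, ε < torusDist x (Y i)) :
    (Fin.cons x Y : Fin (n + 1) → Torus2) ∈ hardSphereConfigs (n + 1) ε := by
  intro i j hij
  cases i using Fin.cases <;> cases j using Fin.cases
  · exact absurd rfl hij
  · exact hx _
  · simpa [torusDist_comm] using hx _
  · exact hY _ _ fun h => hij (congrArg Fin.succ h)

theorem MeasureTheory.Measure.mul_le_prod_apply {α β : Type*} [MeasurableSpace α]
    [MeasurableSpace β] {μ : Measure α} {ν : Measure β} [SFinite μ] [SFinite ν]
    {s : Set (α × β)} {t : Set β} {c : ENNReal} (hs : MeasurableSet s) (ht : MeasurableSet t)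
    (h : ∀ y ∈ t, c ≤ μ ((·, y) ⁻¹' s)) : c * ν t ≤ μ.prod ν s := by
  rw [Measure.prod_apply_symm hs, ← lintegral_indicator_const ht]
  refine lintegral_mono fun y => ?_
  by_cases hy : y ∈ t
  · simpa [hy] using h y hy
  · simp [hy]

theorem ofReal_mul_volume_hardSphereConfigs_le (n : ℕ) (ε : ℝ) :
    ENNReal.ofReal (1 - n * π * ε ^ 2) * volume (hardSphereConfigs n ε) ≤
      volume (hardSphereConfigs (n + 1) ε) := by
  have e := (measurePreserving_piFinSuccAbove (fun _ => (volume : Measure Torus2))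
    (0 : Fin (n + 1))).symm
  have hS := measurableSet_hardSphereConfigs (n + 1) ε
  rw [volume_pi, volume_pi, ← e.measure_preimage hS.nullMeasurableSet]
  refine Measure.mul_le_prod_apply (e.measurable hS) (measurableSet_hardSphereConfigs n ε)
    fun Y hY => ?_
  refine (ofReal_one_sub_le_volume_setOf_forall_lt_torusDist Y ε).trans
    (measure_mono fun x hx => ?_)
  simpa [Fin.insertNthEquiv, Fin.insertNth_zero'] using cons_mem_hardSphereConfigs hY hx

theorem prod_ofReal_le_volume_hardSphereConfigs (n : ℕ) (ε : ℝ) :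
    ∏ k ∈ Finset.range n, ENNReal.ofReal (1 - k * π * ε ^ 2) ≤
      volume (hardSphereConfigs n ε) := by
  induction n with
  | zero => simp [hardSphereConfigs_zero]
  | succ n ih =>
    rw [Finset.prod_range_succ, mul_comm]
    exact (mul_le_mul_right ih _).trans (ofReal_mul_volume_hardSphereConfigs_le n ε)

theorem Real.exp_neg_two_mul_le_one_sub {b : ℝ} (hb₀ : 0 ≤ b) (hb : b ≤ 1 / 2) :
    exp (-2 * b) ≤ 1 - b := by
  have hpos : 0 < 1 + 2 * b := by linarith
  calc exp (-2 * b) = (exp (2 * b))⁻¹ := by rw [← exp_neg, neg_mul]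
    _ ≤ (1 + 2 * b)⁻¹ := inv_anti₀ hpos (by linarith [add_one_le_exp (2 * b)])
    _ ≤ 1 - b := by rw [inv_le_iff_one_le_mul₀ hpos]; nlinarith

theorem hard_sphere_partition_function_lower_bound_general
    (N : ℕ) (ε : ℝ)
    (hscale : (N : ℝ) * π * ε ^ 2 ≤ 1 / 2) :
    (ENNReal.ofReal ((1 - (N : ℝ) * π * ε ^ 2) ^ N) ≤
      volume {X : Fin N → Torus2 | ∀ i j : Fin N, i ≠ j → ε < torusDist (X i) (X j)}) ∧
    ∀ α : ℝ, 0 < α → (N : ℝ) * ε = 1 / α →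
      ENNReal.ofReal (Real.exp (-2 * π / α ^ 2)) ≤
        volume {X : Fin N → Torus2 | ∀ i j : Fin N, i ≠ j → ε < torusDist (X i) (X j)} := by
  set b := (N : ℝ) * π * ε ^ 2
  have hb₀ : 0 ≤ b := by positivity
  have h_bound : ENNReal.ofReal ((1 - b) ^ N) ≤ volume (hardSphereConfigs N ε) := by
    rw [ENNReal.ofReal_pow (by linarith)]
    refine le_trans ?_ (prod_ofReal_le_volume_hardSphereConfigs N ε)
    simpa using Finset.pow_card_le_prod (Finset.range N) _ _ fun k hk => by
      have : (k : ℝ) ≤ N := by exact_mod_cast (Finset.mem_range.1 hk).le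
      simp only [b]; gcongr
  refine ⟨h_bound, fun α _ hNε => le_trans ?_ h_bound⟩
  have h_exponent : -2 * π / α ^ 2 = N * (-2 * b) := by
    calc -2 * π / α ^ 2 = -2 * π * (1 / α) ^ 2 := by ring
      _ = N * (-2 * b) := by rw [← hNε]; ring
  rw [h_exponent, exp_nat_mul]
  exact ENNReal.ofReal_le_ofReal
    (pow_le_pow_left₀ (exp_nonneg _) (exp_neg_two_mul_le_one_sub hb₀ hscale) N)

/-- Lower bound for the hard-sphere partition function on `𝕋²`: if
`N π ε² ≤ 1/2` then the Haar measure of the set of `N`-point configurations with pairwise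
distances `> ε` is at least `(1 - N π ε²)^N`; in particular, in the Boltzmann–Grad scaling
`N ε = 1/α` it is at least `exp(-2π/α²)`. -/
theorem hard_sphere_partition_function_lower_bound
    (N : ℕ) (hN : 1 ≤ N) (ε : ℝ) (hε0 : 0 < ε) (hε : ε < 1 / 2)
    (hscale : (N : ℝ) * π * ε ^ 2 ≤ 1 / 2) :
    (ENNReal.ofReal ((1 - (N : ℝ) * π * ε ^ 2) ^ N) ≤
      volume {X : Fin N → Torus2 | ∀ i j : Fin N, i ≠ j → ε < torusDist (X i) (X j)}) ∧
    ∀ α : ℝ, 0 < α → (N : ℝ) * ε = 1 / α →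
      ENNReal.ofReal (Real.exp (-2 * π / α ^ 2)) ≤
        volume {X : Fin N → Torus2 | ∀ i j : Fin N, i ≠ j → ε < torusDist (X i) (X j)} :=
  hard_sphere_partition_function_lower_bound_general N ε hscale
end
end

section
/- For every real number x with 0 ≤ x ≤ 1/4, the super-exponential series Σ_{k=1}^{∞} 2^{k²} x^{2^k} converges and satisfies Σ_{k=1}^{∞} 2^{k²} x^{2^k} ≤ 4 x². -/
lemma superexp_aux : ∀ k : ℕ, (k + 1) ^ 2 + k + 3 ≤ 2 ^ (k + 2) := by
  intro k
  induction k with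
  | zero => norm_num
  | succ n ih =>
    have h : (n + 1 + 1) ^ 2 + (n + 1) + 3 ≤ 2 * ((n + 1) ^ 2 + n + 3) := by nlinarith
    calc (n + 1 + 1) ^ 2 + (n + 1) + 3 ≤ 2 * ((n + 1) ^ 2 + n + 3) := h
      _ ≤ 2 * 2 ^ (n + 2) := by omega
      _ = 2 ^ (n + 3) := by ring

lemma superexp_term_bound (x : ℝ) (hx0 : 0 ≤ x) (hx : x ≤ 1 / 4) (k : ℕ) :
    (2 : ℝ) ^ ((k + 1) ^ 2) * x ^ 2 ^ (k + 1) ≤ 2 * x ^ 2 * (1 / 2) ^ k := by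
  have hm2 : 2 ≤ 2 ^ (k + 1) := by
    calc 2 = 2 ^ 1 := rfl
    _ ≤ 2 ^ (k + 1) := Nat.pow_le_pow_right (by norm_num) (by omega)
  set m : ℕ := 2 ^ (k + 1) - 2 with hm
  have hmeq : 2 ^ (k + 1) = m + 2 := by omega
  -- nat inequality: 2^((k+1)^2 + k) ≤ 2 * 4^m
  have hnat : 2 ^ ((k + 1) ^ 2 + k) ≤ 2 * 4 ^ m := by
    have h4 : (4 : ℕ) ^ m = 2 ^ (2 * m) := by
      rw [pow_mul]; norm_num
    have haux := superexp_aux k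
    have hexp : (k + 1) ^ 2 + k ≤ 2 * m + 1 := by
      have : 2 * m + 1 = 2 ^ (k + 2) - 3 := by
        have : 2 ^ (k + 2) = 2 * 2 ^ (k + 1) := by ring
        omega
      omega
    calc 2 ^ ((k + 1) ^ 2 + k) ≤ 2 ^ (2 * m + 1) := Nat.pow_le_pow_right (by norm_num) hexp
      _ = 2 * 2 ^ (2 * m) := by ring
      _ = 2 * 4 ^ m := by rw [h4]
  have hreal : (2 : ℝ) ^ ((k + 1) ^ 2) * 2 ^ k ≤ 2 * 4 ^ m := by
    have := (Nat.cast_le (α := ℝ)).2 hnat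
    push_cast [pow_add] at this
    linarith
  -- divide to get the coefficient bound
  have hcoef : (2 : ℝ) ^ ((k + 1) ^ 2) * (1 / 4) ^ m ≤ 2 * (1 / 2) ^ k := by
    rw [div_pow, div_pow, one_pow, one_pow, mul_one_div, mul_one_div]
    rw [div_le_div_iff₀ (by positivity) (by positivity)]
    exact hreal
  have hxm : x ^ m ≤ (1 / 4 : ℝ) ^ m := pow_le_pow_left₀ hx0 hx m
  have hxsq : (0 : ℝ) ≤ x ^ 2 := sq_nonneg x
  calc (2 : ℝ) ^ ((k + 1) ^ 2) * x ^ 2 ^ (k + 1)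
      = (2 : ℝ) ^ ((k + 1) ^ 2) * (x ^ m * x ^ 2) := by rw [hmeq, pow_add]
    _ ≤ (2 : ℝ) ^ ((k + 1) ^ 2) * ((1 / 4) ^ m * x ^ 2) := by
        apply mul_le_mul_of_nonneg_left _ (by positivity)
        exact mul_le_mul_of_nonneg_right hxm hxsq
    _ = ((2 : ℝ) ^ ((k + 1) ^ 2) * (1 / 4) ^ m) * x ^ 2 := by ring
    _ ≤ (2 * (1 / 2) ^ k) * x ^ 2 := mul_le_mul_of_nonneg_right hcoef hxsq
    _ = 2 * x ^ 2 * (1 / 2) ^ k := by ring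

/-- For `0 ≤ x ≤ 1/4`, the super-exponential series
`Σ_{k≥1} 2^{k²} x^{2^k}` converges and is bounded by `4 x²`. -/
theorem superexponential_series_bound
    (x : ℝ) (hx0 : 0 ≤ x) (hx : x ≤ 1 / 4) :
    Summable (fun k : ℕ => (2 : ℝ) ^ ((k + 1) ^ 2) * x ^ 2 ^ (k + 1)) ∧
    ∑' k : ℕ, (2 : ℝ) ^ ((k + 1) ^ 2) * x ^ 2 ^ (k + 1) ≤ 4 * x ^ 2 := by
  have hgeo : Summable (fun k : ℕ => 2 * x ^ 2 * (1 / 2 : ℝ) ^ k) := by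
    apply Summable.mul_left
    exact summable_geometric_of_lt_one (by norm_num) (by norm_num)
  have hle := superexp_term_bound x hx0 hx
  have hnonneg : ∀ k : ℕ, 0 ≤ (2 : ℝ) ^ ((k + 1) ^ 2) * x ^ 2 ^ (k + 1) := by
    intro k; positivity
  have hsum : Summable (fun k : ℕ => (2 : ℝ) ^ ((k + 1) ^ 2) * x ^ 2 ^ (k + 1)) :=
    Summable.of_nonneg_of_le hnonneg hle hgeo
  refine ⟨hsum, ?_⟩
  calc ∑' k : ℕ, (2 : ℝ) ^ ((k + 1) ^ 2) * x ^ 2 ^ (k + 1)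
      ≤ ∑' k : ℕ, 2 * x ^ 2 * (1 / 2 : ℝ) ^ k := Summable.tsum_le_tsum hle hsum hgeo
    _ = 2 * x ^ 2 * ∑' k : ℕ, (1 / 2 : ℝ) ^ k := by rw [tsum_mul_left]
    _ = 2 * x ^ 2 * 2 := by rw [tsum_geometric_two]
    _ = 4 * x ^ 2 := by ring
end
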